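/- arXiv:0705.1270 — 2 statements merged into one kernel-verified Lean document; each statement's English description precedes it below -/
import Mathlib

section
/- (Two time-point IPTW = G-computation, restricted history s=1 at t=1) In the two time-point study, under consistency, SRA, and positivity, consider the history-restricted counterfactual Y_{a(1)} := Y_{A(0),a(1)} where A(0) is left random. Then E[Y_{a(1)}] = E[ 1{A(1)=a(1)} Y / P(A(1)=a(1) | A(0), L(0), L(1)) ] = Σ_{a(0),l(0),l(1)} E[Y | A(0)=a(0), A(1)=a(1), L̄(1)=(l(0),l(1))] · P(A(0)=a(0), L(0)=l(0), L(1)=l(1)). In particular the HRMSM parameter E[Y_{a(1)}] depends on the treatment mechanism at time 0 (it is a parameter of (F_X, g), not of F_X alone). -/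
open Finset
open scoped Classical

noncomputable section

def pr {Ω : Type} [Fintype Ω] (μ : Ω → ℝ) (E : Ω → Prop) : ℝ :=
  ∑ ω, if E ω then μ ω else 0

def cpr {Ω : Type} [Fintype Ω] (μ : Ω → ℝ) (E F : Ω → Prop) : ℝ :=
  pr μ (fun ω => E ω ∧ F ω) / pr μ F

def ex {Ω : Type} [Fintype Ω] (μ : Ω → ℝ) (f : Ω → ℝ) : ℝ :=
  ∑ ω, f ω * μ ω

def cex {Ω : Type} [Fintype Ω] (μ : Ω → ℝ) (f : Ω → ℝ) (F : Ω → Prop) : ℝ :=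
  (∑ ω, if F ω then f ω * μ ω else 0) / pr μ F

/-! The proof conditions on the strata `A(0) = a0, L(0) = l0, L(1) = l1`. Inside a stratum of
positive mass, the SRA makes the event `A(1) = a1` independent of the whole vector of
counterfactuals, so restricting any function of that vector to `A(1) = a1` scales its partial
mean by the propensity `g = P(A(1) = a1 | stratum)`. Consistency identifies `Y` with
`Y_{a0,a1}` on the treated part of the stratum; dividing by `g` (IPTW) or by the mass of the
treated part (G-computation) then recovers the stratum's contribution to `E[Y_{a1}]`.
Strata of mass zero contribute nothing to either side. -/

section FiniteExpectation

variable {Ω : Type} [Fintype Ω] (μ : Ω → ℝ)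

/-- The partial mean `E[f; E]`. -/
def exOn (f : Ω → ℝ) (E : Ω → Prop) : ℝ :=
  ∑ ω, if E ω then f ω * μ ω else 0

theorem cex_eq_exOn_div (f : Ω → ℝ) (F : Ω → Prop) : cex μ f F = exOn μ f F / pr μ F := rfl

theorem pr_congr {E F : Ω → Prop} (h : ∀ ω, E ω ↔ F ω) : pr μ E = pr μ F :=
  congrArg (pr μ) (funext fun ω => propext (h ω))

theorem exOn_congr {f g : Ω → ℝ} {E F : Ω → Prop} (hEF : ∀ ω, E ω ↔ F ω)
    (hfg : ∀ ω, F ω → f ω = g ω) : exOn μ f E = exOn μ g F :=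
  sum_congr rfl fun ω _ => by by_cases hω : F ω <;> simp [hω, hEF ω, hfg]

theorem cex_congr {f g : Ω → ℝ} {E F : Ω → Prop} (hEF : ∀ ω, E ω ↔ F ω)
    (hfg : ∀ ω, F ω → f ω = g ω) : cex μ f E = cex μ g F := by
  rw [cex_eq_exOn_div, cex_eq_exOn_div, exOn_congr μ hEF hfg, pr_congr μ hEF]

theorem pr_nonneg (hμ : ∀ ω, 0 ≤ μ ω) (E : Ω → Prop) : 0 ≤ pr μ E :=
  sum_nonneg fun ω _ => by split_ifs <;> simp [hμ ω]

theorem exOn_eq_zero_of_pr_eq_zero (hμ : ∀ ω, 0 ≤ μ ω) {E : Ω → Prop} (hE : pr μ E = 0)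
    (f : Ω → ℝ) : exOn μ f E = 0 := by
  have hzero := (sum_eq_zero_iff_of_nonneg fun ω _ => by split_ifs <;> simp [hμ ω]).mp hE
  refine sum_eq_zero fun ω hω => ?_
  have hμω := hzero ω hω
  split_ifs at hμω ⊢ <;> simp [hμω]

theorem pr_and_eq_cpr_mul (E : Ω → Prop) {F : Ω → Prop} (hF : pr μ F ≠ 0) :
    pr μ (fun ω => E ω ∧ F ω) = cpr μ E F * pr μ F :=
  (div_mul_cancel₀ _ hF).symm

theorem exOn_ite_one_mul (Q : Ω → Prop) (g : Ω → ℝ) (E : Ω → Prop) :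
    exOn μ (fun ω => (if Q ω then 1 else 0) * g ω) E = exOn μ g (fun ω => E ω ∧ Q ω) :=
  sum_congr rfl fun ω _ => by by_cases hE : E ω <;> by_cases hQ : Q ω <;> simp [hE, hQ]

theorem exOn_div_const (f : Ω → ℝ) (c : ℝ) (E : Ω → Prop) :
    exOn μ (fun ω => f ω / c) E = exOn μ f E / c := by
  rw [exOn, exOn, sum_div]
  exact sum_congr rfl fun ω _ => by split_ifs <;> ring

theorem ex_eq_sum_exOn_fiber {β : Type} [Fintype β] (s : Ω → β) (f : Ω → ℝ) :
    ex μ f = ∑ b, exOn μ f (fun ω => s ω = b) := by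
  simp only [ex, exOn]
  rw [sum_comm]
  simp

theorem ex_eq_sum_sum_sum_exOn {α β γ : Type} [Fintype α] [Fintype β] [Fintype γ]
    (a : Ω → α) (b : Ω → β) (c : Ω → γ) (f : Ω → ℝ) :
    ex μ f = ∑ x, ∑ y, ∑ z, exOn μ f (fun ω => a ω = x ∧ b ω = y ∧ c ω = z) := by
  simp only [ex_eq_sum_exOn_fiber μ (fun ω => (a ω, b ω, c ω)), Fintype.sum_prod_type,
    Prod.mk.injEq]

theorem exOn_comp_eq_sum {β : Type} (h : β → ℝ) (k : Ω → β) (E : Ω → Prop) :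
    exOn μ (fun ω => h (k ω)) E = ∑ v ∈ univ.image k, h v * pr μ (fun ω => E ω ∧ k ω = v) := by
  simp only [exOn, pr, mul_sum, mul_ite, mul_zero]
  rw [sum_comm]
  refine sum_congr rfl fun ω _ => ?_
  rw [sum_eq_single_of_mem (k ω) (mem_image_of_mem k (mem_univ ω))
    fun v _ hv => if_neg fun hc => hv hc.2.symm]
  by_cases hE : E ω <;> simp [hE, mul_comm]

theorem exOn_comp_eq_mul_of_pr_fiber_eq_mul {β : Type} (h : β → ℝ) (k : Ω → β)
    {E F : Ω → Prop} {c : ℝ}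
    (hk : ∀ v, pr μ (fun ω => E ω ∧ k ω = v) = c * pr μ (fun ω => F ω ∧ k ω = v)) :
    exOn μ (fun ω => h (k ω)) E = c * exOn μ (fun ω => h (k ω)) F := by
  rw [exOn_comp_eq_sum, exOn_comp_eq_sum, mul_sum]
  exact sum_congr rfl fun v _ => by rw [hk v]; ring

theorem exOn_and_eq_cpr_mul_of_condIndep {β : Type} (h : β → ℝ) (k : Ω → β)
    {S T : Ω → Prop} (hS : pr μ S ≠ 0)
    (hindep : ∀ v, cpr μ (fun ω => T ω ∧ k ω = v) S = cpr μ T S * cpr μ (fun ω => k ω = v) S) :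
    exOn μ (fun ω => h (k ω)) (fun ω => S ω ∧ T ω) = cpr μ T S * exOn μ (fun ω => h (k ω)) S := by
  refine exOn_comp_eq_mul_of_pr_fiber_eq_mul μ h k fun v => ?_
  calc pr μ (fun ω => (S ω ∧ T ω) ∧ k ω = v)
      = pr μ (fun ω => (T ω ∧ k ω = v) ∧ S ω) := pr_congr μ fun ω => by tauto
    _ = cpr μ T S * (cpr μ (fun ω => k ω = v) S * pr μ S) := by
      rw [pr_and_eq_cpr_mul μ _ hS, hindep v, mul_assoc]
    _ = cpr μ T S * pr μ (fun ω => S ω ∧ k ω = v) := by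
      rw [← pr_and_eq_cpr_mul μ _ hS, pr_congr μ fun ω => and_comm]

variable {S T : Ω → Prop} {f : Ω → ℝ}

theorem exOn_ite_mul_div_cpr (hT : cpr μ T S ≠ 0)
    (hfactor : exOn μ f (fun ω => S ω ∧ T ω) = cpr μ T S * exOn μ f S) :
    exOn μ (fun ω => (if T ω then 1 else 0) * f ω / cpr μ T S) S = exOn μ f S := by
  rw [exOn_div_const μ (fun ω => (if T ω then 1 else 0) * f ω), exOn_ite_one_mul, hfactor,
    mul_div_cancel_left₀ _ hT]

theorem cex_and_mul_pr (hS : pr μ S ≠ 0) (hT : cpr μ T S ≠ 0)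
    (hfactor : exOn μ f (fun ω => S ω ∧ T ω) = cpr μ T S * exOn μ f S) :
    cex μ f (fun ω => S ω ∧ T ω) * pr μ S = exOn μ f S := by
  rw [cex_eq_exOn_div, hfactor, pr_congr μ fun ω => and_comm, pr_and_eq_cpr_mul μ T hS]
  field_simp

end FiniteExpectation

theorem two_timepoint_restricted_iptw_gcomp_general
    {Ω 𝒜₀ 𝒜₁ ℒ₀ ℒ₁ : Type} [Fintype Ω] [Fintype 𝒜₀] [Fintype 𝒜₁] [Fintype ℒ₀] [Fintype ℒ₁]
    (μ : Ω → ℝ) (hμ : ∀ ω, 0 ≤ μ ω)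
    (L0 : Ω → ℒ₀) (A0 : Ω → 𝒜₀) (L1 : Ω → ℒ₁) (A1 : Ω → 𝒜₁)
    (CL1 : 𝒜₀ → Ω → ℒ₁) (CY : 𝒜₀ → 𝒜₁ → Ω → ℝ) (Y : Ω → ℝ)
    (hconsY : ∀ ω, Y ω = CY (A0 ω) (A1 ω) ω)
    (SRA1 : ∀ (a1 : 𝒜₁) (c : 𝒜₀ → ℒ₁) (y : 𝒜₀ → 𝒜₁ → ℝ) (a0 : 𝒜₀) (l0 : ℒ₀) (l1 : ℒ₁),
      pr μ (fun ω => A0 ω = a0 ∧ L0 ω = l0 ∧ L1 ω = l1) > 0 →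
      cpr μ (fun ω => A1 ω = a1 ∧ ((∀ a, CL1 a ω = c a) ∧ ∀ a a', CY a a' ω = y a a'))
        (fun ω => A0 ω = a0 ∧ L0 ω = l0 ∧ L1 ω = l1) =
      cpr μ (fun ω => A1 ω = a1) (fun ω => A0 ω = a0 ∧ L0 ω = l0 ∧ L1 ω = l1) *
      cpr μ (fun ω => (∀ a, CL1 a ω = c a) ∧ ∀ a a', CY a a' ω = y a a')
        (fun ω => A0 ω = a0 ∧ L0 ω = l0 ∧ L1 ω = l1))
    (POS1 : ∀ (a1 : 𝒜₁) (a0 : 𝒜₀) (l0 : ℒ₀) (l1 : ℒ₁),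
      pr μ (fun ω => A0 ω = a0 ∧ L0 ω = l0 ∧ L1 ω = l1) > 0 →
      cpr μ (fun ω => A1 ω = a1) (fun ω => A0 ω = a0 ∧ L0 ω = l0 ∧ L1 ω = l1) > 0)
    (a1 : 𝒜₁) :
    ex μ (fun ω => CY (A0 ω) a1 ω) =
      ex μ (fun ω => (if A1 ω = a1 then (1 : ℝ) else 0) * Y ω /
        cpr μ (fun ω' => A1 ω' = a1)
          (fun ω' => A0 ω' = A0 ω ∧ L0 ω' = L0 ω ∧ L1 ω' = L1 ω)) ∧
    ex μ (fun ω => CY (A0 ω) a1 ω) =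
      ∑ a0 : 𝒜₀, ∑ l0 : ℒ₀, ∑ l1 : ℒ₁,
        cex μ Y (fun ω => A0 ω = a0 ∧ A1 ω = a1 ∧ L0 ω = l0 ∧ L1 ω = l1) *
        pr μ (fun ω => A0 ω = a0 ∧ L0 ω = l0 ∧ L1 ω = l1) := by
  have hfactor : ∀ a0 l0 l1, 0 < pr μ (fun ω => A0 ω = a0 ∧ L0 ω = l0 ∧ L1 ω = l1) →
      exOn μ (CY a0 a1) (fun ω => (A0 ω = a0 ∧ L0 ω = l0 ∧ L1 ω = l1) ∧ A1 ω = a1) =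
        cpr μ (fun ω => A1 ω = a1) (fun ω => A0 ω = a0 ∧ L0 ω = l0 ∧ L1 ω = l1) *
          exOn μ (CY a0 a1) (fun ω => A0 ω = a0 ∧ L0 ω = l0 ∧ L1 ω = l1) := fun a0 l0 l1 hS =>
    exOn_and_eq_cpr_mul_of_condIndep μ (fun v => v.2 a0 a1)
      (fun ω => (fun a => CL1 a ω, fun a a' => CY a a' ω)) hS.ne' fun v => by
        simpa [Prod.ext_iff, funext_iff] using SRA1 a1 v.1 v.2 a0 l0 l1 hS
  have hlhs : ex μ (fun ω => CY (A0 ω) a1 ω) = ∑ a0, ∑ l0, ∑ l1,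
      exOn μ (CY a0 a1) (fun ω => A0 ω = a0 ∧ L0 ω = l0 ∧ L1 ω = l1) := by
    rw [ex_eq_sum_sum_sum_exOn μ A0 L0 L1]
    exact sum_congr rfl fun a0 _ => sum_congr rfl fun l0 _ => sum_congr rfl fun l1 _ =>
      exOn_congr μ (fun _ => Iff.rfl) fun ω hω => by rw [hω.1]
  rw [hlhs, ex_eq_sum_sum_sum_exOn μ A0 L0 L1]
  refine ⟨sum_congr rfl fun a0 _ => sum_congr rfl fun l0 _ => sum_congr rfl fun l1 _ => ?_,
    sum_congr rfl fun a0 _ => sum_congr rfl fun l0 _ => sum_congr rfl fun l1 _ => ?_⟩ <;>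
    rcases (pr_nonneg μ hμ (fun ω => A0 ω = a0 ∧ L0 ω = l0 ∧ L1 ω = l1)).eq_or_lt with hS | hS
  · simp only [exOn_eq_zero_of_pr_eq_zero μ hμ hS.symm]
  · rw [← exOn_ite_mul_div_cpr μ (POS1 a1 a0 l0 l1 hS).ne' (hfactor a0 l0 l1 hS)]
    refine exOn_congr μ (fun _ => Iff.rfl) fun ω ⟨h0, h1, h2⟩ => ?_
    subst h0 h1 h2
    split_ifs with hA <;> simp [hconsY, hA]
  · rw [← hS, mul_zero, exOn_eq_zero_of_pr_eq_zero μ hμ hS.symm]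
  · rw [← cex_and_mul_pr μ hS.ne' (POS1 a1 a0 l0 l1 hS).ne' (hfactor a0 l0 l1 hS)]
    refine congrArg (· * _) (cex_congr μ (fun ω => by tauto) fun ω hω => ?_)
    rw [hconsY, hω.1, hω.2.1]

/-- two time-point study, history-restricted counterfactual
`Y_{a1} = Y_{A(0),a1}` with `A(0)` left random (s = 1 at t = 1): its mean equals
the IPTW expression and the restricted G-computation formula; in particular it
is a parameter of `(F_X, g)`, depending on the time-0 treatment mechanism. -/
theorem two_timepoint_restricted_iptw_gcomp
    {Ω 𝒜₀ 𝒜₁ ℒ₀ ℒ₁ : Type} [Fintype Ω] [Fintype 𝒜₀] [Fintype 𝒜₁] [Fintype ℒ₀] [Fintype ℒ₁]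
    (μ : Ω → ℝ) (hμ : ∀ ω, 0 ≤ μ ω) (hsum : ∑ ω, μ ω = 1)
    (L0 : Ω → ℒ₀) (A0 : Ω → 𝒜₀) (L1 : Ω → ℒ₁) (A1 : Ω → 𝒜₁)
    (CL1 : 𝒜₀ → Ω → ℒ₁) (CY : 𝒜₀ → 𝒜₁ → Ω → ℝ) (Y : Ω → ℝ)
    (hconsL : ∀ ω, L1 ω = CL1 (A0 ω) ω)
    (hconsY : ∀ ω, Y ω = CY (A0 ω) (A1 ω) ω)
    (SRA1 : ∀ (a1 : 𝒜₁) (c : 𝒜₀ → ℒ₁) (y : 𝒜₀ → 𝒜₁ → ℝ) (a0 : 𝒜₀) (l0 : ℒ₀) (l1 : ℒ₁),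
      pr μ (fun ω => A0 ω = a0 ∧ L0 ω = l0 ∧ L1 ω = l1) > 0 →
      cpr μ (fun ω => A1 ω = a1 ∧ ((∀ a, CL1 a ω = c a) ∧ ∀ a a', CY a a' ω = y a a'))
        (fun ω => A0 ω = a0 ∧ L0 ω = l0 ∧ L1 ω = l1) =
      cpr μ (fun ω => A1 ω = a1) (fun ω => A0 ω = a0 ∧ L0 ω = l0 ∧ L1 ω = l1) *
      cpr μ (fun ω => (∀ a, CL1 a ω = c a) ∧ ∀ a a', CY a a' ω = y a a')
        (fun ω => A0 ω = a0 ∧ L0 ω = l0 ∧ L1 ω = l1))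
    (POS1 : ∀ (a1 : 𝒜₁) (a0 : 𝒜₀) (l0 : ℒ₀) (l1 : ℒ₁),
      pr μ (fun ω => A0 ω = a0 ∧ L0 ω = l0 ∧ L1 ω = l1) > 0 →
      cpr μ (fun ω => A1 ω = a1) (fun ω => A0 ω = a0 ∧ L0 ω = l0 ∧ L1 ω = l1) > 0)
    (a1 : 𝒜₁) :
    ex μ (fun ω => CY (A0 ω) a1 ω) =
      ex μ (fun ω => (if A1 ω = a1 then (1 : ℝ) else 0) * Y ω /
        cpr μ (fun ω' => A1 ω' = a1)
          (fun ω' => A0 ω' = A0 ω ∧ L0 ω' = L0 ω ∧ L1 ω' = L1 ω)) ∧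
    ex μ (fun ω => CY (A0 ω) a1 ω) =
      ∑ a0 : 𝒜₀, ∑ l0 : ℒ₀, ∑ l1 : ℒ₁,
        cex μ Y (fun ω => A0 ω = a0 ∧ A1 ω = a1 ∧ L0 ω = l0 ∧ L1 ω = l1) *
        pr μ (fun ω => A0 ω = a0 ∧ L0 ω = l0 ∧ L1 ω = l1) :=
  two_timepoint_restricted_iptw_gcomp_general μ hμ L0 A0 L1 A1 CL1 CY Y hconsY SRA1 POS1 a1
end
end

section
/- (Stabilized weights preserve unbiasedness) Under consistency, temporal ordering, SRA, positivity, and a correctly specified HRMSM m_t(ā(t-s+1,t), V(t-s+1) | β*) = E[Y_{ā(t-s+1,t)}(t+1) | V(t-s+1)], the stabilized IPTW estimating function also has mean zero at β*: E[ h*(Ā(t-s+1,t), V(t-s+1)) · ∏_{j=t-s+1}^{t} g*(A(j) | Ā(t-s+1,j-1), V(t-s+1)) / ∏_{j=t-s+1}^{t} g(A(j) | Ā(j-1), L̄(j)) · (Y(t+1) − m_t(Ā(t-s+1,t), V(t-s+1) | β*)) ] = 0, for any bounded h* depending only on (Ā(t-s+1,t), V(t-s+1)) and any conditional probabilities g*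 depending only on treatment history after t-s and V(t-s+1). -/
open Finset
open scoped Classical

noncomputable section

/-!
Split the expectation along the treatment pattern `p` observed on the window `[t + 1 - s, t]`.
On the event that the treatments follow `p`, consistency and temporal ordering turn `Y(t + 1)`
into the counterfactual `Y_p(t + 1)`, and `h*`, `g*`, `m` are evaluated at `p`, so the summand
is the inverse-probability weight of `p` times `c(V) (Y_p(t + 1) - m(p, V))` with
`c(V) = h*(p, V) ∏ g*(p(j) | p, V)`. The weight is
peeled off one time point at a time: sequential randomization makes `A(k)` conditionally
independent of the counterfactual process given the history at `k`, hence
`E[1{A(k) = p(k)} Ψ / P(A(k) = p(k) | history)] = E[Ψ]` for every `Ψ` determined by that history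
and the counterfactuals. What remains, `E[c(V) (Y_p(t + 1) - m(p, V))]`, vanishes because the
model is correctly specified.
-/

section

variable {Ω : Type} [Fintype Ω]

theorem pr_eq_sum_filter (μ : Ω → ℝ) (E : Ω → Prop) [DecidablePred E] :
    pr μ E = ∑ ω with E ω, μ ω := by
  rw [pr, sum_filter]
  congr!

theorem pr_pos_of_pos (μ : Ω → ℝ) (hμ : ∀ ω, 0 ≤ μ ω) {E : Ω → Prop} {ω₀ : Ω} (hE : E ω₀)
    (h₀ : 0 < μ ω₀) : 0 < pr μ E := by
  rw [pr_eq_sum_filter]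
  exact h₀.trans_le <| single_le_sum (fun ω _ => hμ ω) (mem_filter.2 ⟨mem_univ _, hE⟩)

theorem cpr_mul_pr (μ : Ω → ℝ) (E : Ω → Prop) {F : Ω → Prop} (hF : pr μ F ≠ 0) :
    cpr μ E F * pr μ F = pr μ (fun ω => E ω ∧ F ω) :=
  div_mul_cancel₀ _ hF

theorem cex_mul_pr (μ : Ω → ℝ) (f : Ω → ℝ) {F : Ω → Prop} [DecidablePred F]
    (hF : pr μ F ≠ 0) : cex μ f F * pr μ F = ∑ ω with F ω, f ω * μ ω := by
  rw [cex, div_mul_cancel₀ _ hF, sum_filter]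
  congr!

theorem sum_filter_mul_eq_mul_pr (μ : Ω → ℝ) {F : Ω → Prop} [DecidablePred F] {f : Ω → ℝ}
    {c : ℝ} (hf : ∀ ω, F ω → f ω = c) : ∑ ω with F ω, f ω * μ ω = c * pr μ F := by
  rw [pr_eq_sum_filter, mul_sum]
  exact sum_congr rfl fun ω hω => by rw [hf ω (mem_filter.1 hω).2]

theorem ex_eq_of_sum_fiber_eq {κ : Type*} [DecidableEq κ] (μ : Ω → ℝ) (hμ : ∀ ω, 0 ≤ μ ω)
    (P : Ω → κ) {f g : Ω → ℝ}
    (h : ∀ ω₀, 0 < μ ω₀ →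
      ∑ ω with P ω = P ω₀, f ω * μ ω = ∑ ω with P ω = P ω₀, g ω * μ ω) :
    ex μ f = ex μ g := by
  have hP : ∀ ω ∈ univ, P ω ∈ univ.image P := fun ω _ => mem_image_of_mem P (mem_univ ω)
  rw [ex, ex, ← sum_fiberwise_of_maps_to hP, ← sum_fiberwise_of_maps_to hP]
  refine sum_congr rfl fun y _ => ?_
  by_cases hy : ∃ ω₀, P ω₀ = y ∧ 0 < μ ω₀
  · obtain ⟨ω₀, rfl, h₀⟩ := hy
    exact h ω₀ h₀
  · push Not at hy
    have hnull : ∀ ω ∈ univ.filter (P · = y), μ ω = 0 := fun ω hω =>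
      le_antisymm (hy ω (mem_filter.1 hω).2) (hμ ω)
    rw [sum_eq_zero fun ω hω => by rw [hnull ω hω, mul_zero],
      sum_eq_zero fun ω hω => by rw [hnull ω hω, mul_zero]]

theorem ex_mul_sub_eq_zero_of_cex_eq {𝒱 : Type*} (μ : Ω → ℝ) (hμ : ∀ ω, 0 ≤ μ ω) (V : Ω → 𝒱)
    (c m : 𝒱 → ℝ) {Z : Ω → ℝ}
    (hZ : ∀ v, 0 < pr μ (fun ω => V ω = v) → cex μ Z (fun ω => V ω = v) = m v) :
    ex μ (fun ω => c (V ω) * (Z ω - m (V ω))) = 0 := by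
  refine (ex_eq_of_sum_fiber_eq μ hμ V (g := 0) fun ω₀ h₀ => ?_).trans (by simp [ex])
  have hV : 0 < pr μ (fun ω => V ω = V ω₀) := pr_pos_of_pos μ hμ rfl h₀
  calc ∑ ω with V ω = V ω₀, c (V ω) * (Z ω - m (V ω)) * μ ω
      = ∑ ω with V ω = V ω₀, (c (V ω₀) * (Z ω * μ ω) - c (V ω₀) * m (V ω₀) * μ ω) :=
        sum_congr rfl fun ω hω => by rw [(mem_filter.1 hω).2]; ring
    _ = c (V ω₀) * (cex μ Z (fun ω => V ω = V ω₀) * pr μ (fun ω => V ω = V ω₀)) -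
          c (V ω₀) * m (V ω₀) * pr μ (fun ω => V ω = V ω₀) := by
        rw [sum_sub_distrib, ← mul_sum, cex_mul_pr μ Z hV.ne',
          sum_filter_mul_eq_mul_pr μ fun _ _ => rfl]
    _ = ∑ ω with V ω = V ω₀, (0 : Ω → ℝ) ω * μ ω := by
        simp only [hZ _ hV, Pi.zero_apply, zero_mul, sum_const_zero]
        ring

def CondIndepGiven {ξ η : Type*} (μ : Ω → ℝ) (E : Ω → Prop) (X : Ω → ξ) (H : Ω → η) : Prop :=
  ∀ ω₀, 0 < μ ω₀ → ∀ x,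
    cpr μ (fun ω => E ω ∧ X ω = x) (fun ω => H ω = H ω₀) =
      cpr μ E (fun ω => H ω = H ω₀) * cpr μ (fun ω => X ω = x) (fun ω => H ω = H ω₀)

theorem ex_ite_div_cpr {ξ η : Type*} (μ : Ω → ℝ) (hμ : ∀ ω, 0 ≤ μ ω) {E : Ω → Prop}
    {X : Ω → ξ} {H : Ω → η} {Ψ : Ω → ℝ} (hCI : CondIndepGiven μ E X H)
    (hpos : ∀ ω₀, 0 < μ ω₀ → 0 < cpr μ E (fun ω => H ω = H ω₀))
    (hΨ : ∀ ω ω', H ω = H ω' → X ω = X ω' → Ψ ω = Ψ ω') :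
    ex μ (fun ω => if E ω then Ψ ω / cpr μ E (fun ω' => H ω' = H ω) else 0) = ex μ Ψ := by
  refine ex_eq_of_sum_fiber_eq μ hμ (fun ω => (X ω, H ω)) fun ω₀ h₀ => ?_
  have hB : pr μ (fun ω => H ω = H ω₀) ≠ 0 :=
    (pr_pos_of_pos μ hμ (E := fun ω => H ω = H ω₀) rfl h₀).ne'
  have hfiber : (fun ω => (X ω, H ω) = (X ω₀, H ω₀)) = fun ω => X ω = X ω₀ ∧ H ω = H ω₀ := by
    simp only [Prod.ext_iff]
  have hsplit : ∀ f : Ω → ℝ, ∑ ω with (X ω, H ω) = (X ω₀, H ω₀), (if E ω then f ω else 0) * μ ω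
      = ∑ ω with (E ω ∧ X ω = X ω₀) ∧ H ω = H ω₀, f ω * μ ω := by
    intro f
    simp only [sum_filter, ite_mul, zero_mul, ← ite_and, Prod.ext_iff]
    exact sum_congr rfl fun ω _ => if_congr (by tauto) rfl rfl
  -- both integrands are constant on a fiber of `(X, H)`, and conditional independence gives
  -- `P(E, X = x, H = h) = P(E | H = h) P(X = x, H = h)`, which cancels the propensity
  rw [hsplit fun ω => Ψ ω / cpr μ E (fun ω' => H ω' = H ω),
    sum_filter_mul_eq_mul_pr μ (c := Ψ ω₀ / cpr μ E (fun ω => H ω = H ω₀))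
      fun ω hω => by rw [hΨ ω ω₀ hω.2 hω.1.2, hω.2],
    sum_filter_mul_eq_mul_pr μ (c := Ψ ω₀) fun ω hω => hΨ ω ω₀ (congrArg Prod.snd hω) (congrArg Prod.fst hω),
    ← cpr_mul_pr μ _ hB, hCI ω₀ h₀, hfiber, ← cpr_mul_pr μ _ hB]
  field_simp [(hpos ω₀ h₀).ne']

end

section History

variable {Ω : Type} {𝒜 ℒ : Type*}

-- the pair `(Ā(k - 1), L̄(k))`, as tuples indexed by `Fin`, so that its fibers are exactly the
-- conditioning events `{Ā(k - 1) = ā, L̄(k) = l̄}`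
def history (A : ℕ → Ω → 𝒜) (L : ℕ → Ω → ℒ) (k : ℕ) (ω : Ω) :
    (Fin k → 𝒜) × (Fin (k + 1) → ℒ) :=
  (fun i => A i ω, fun i => L i ω)

variable {A : ℕ → Ω → 𝒜} {L : ℕ → Ω → ℒ}

theorem history_eq_iff {k : ℕ} {ω ω' : Ω} :
    history A L k ω = history A L k ω' ↔ (∀ i < k, A i ω = A i ω') ∧ ∀ i ≤ k, L i ω = L i ω' := by
  simp only [history, Prod.ext_iff, funext_iff, Fin.forall_iff, Nat.lt_succ_iff]

theorem history_eq_of_le {j k : ℕ} {ω ω' : Ω} (h : history A L k ω = history A L k ω')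
    (hjk : j ≤ k) : history A L j ω = history A L j ω' := by
  rw [history_eq_iff] at h ⊢
  exact ⟨fun i hi => h.1 i (hi.trans_le hjk), fun i hi => h.2 i (hi.trans hjk)⟩

theorem apply_eq_of_history_eq {j k : ℕ} {ω ω' : Ω} (h : history A L k ω = history A L k ω')
    (hjk : j < k) : A j ω = A j ω' :=
  (history_eq_iff.1 h).1 j hjk

variable [Fintype Ω]

theorem condIndepGiven_history {ξ : Type*} {μ : Ω → ℝ} (hμ : ∀ ω, 0 ≤ μ ω) {k : ℕ}
    {E : Ω → Prop} {X : Ω → ξ}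
    (h : ∀ x (ab : ℕ → 𝒜) (lb : ℕ → ℒ),
      0 < pr μ (fun ω => (∀ i < k, A i ω = ab i) ∧ ∀ i ≤ k, L i ω = lb i) →
      cpr μ (fun ω => E ω ∧ X ω = x) (fun ω => (∀ i < k, A i ω = ab i) ∧ ∀ i ≤ k, L i ω = lb i) =
        cpr μ E (fun ω => (∀ i < k, A i ω = ab i) ∧ ∀ i ≤ k, L i ω = lb i) *
        cpr μ (fun ω => X ω = x) (fun ω => (∀ i < k, A i ω = ab i) ∧ ∀ i ≤ k, L i ω = lb i)) :
    CondIndepGiven μ E X (history A L k) := fun ω₀ h₀ x => by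
  simpa only [history_eq_iff] using h x (fun i => A i ω₀) (fun i => L i ω₀)
    (pr_pos_of_pos μ hμ ⟨fun _ _ => rfl, fun _ _ => rfl⟩ h₀)

def propensity (μ : Ω → ℝ) (A : ℕ → Ω → 𝒜) (L : ℕ → Ω → ℒ) (k : ℕ) (ω : Ω) : ℝ :=
  cpr μ (fun ω' => A k ω' = A k ω) (fun ω' => history A L k ω' = history A L k ω)

def ipwWeight (μ : Ω → ℝ) (A : ℕ → Ω → 𝒜) (L : ℕ → Ω → ℒ) (p : ℕ → 𝒜) (r n : ℕ) (ω : Ω) : ℝ :=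
  ∏ j ∈ Ico r n, if A j ω = p j then (propensity μ A L j ω)⁻¹ else 0

variable {μ : Ω → ℝ}

theorem propensity_eq_cpr (k : ℕ) (ω : Ω) :
    propensity μ A L k ω = cpr μ (fun ω' => A k ω' = A k ω)
      (fun ω' => (∀ i < k, A i ω' = A i ω) ∧ ∀ i ≤ k, L i ω' = L i ω) := by
  simp only [propensity, history_eq_iff]

theorem propensity_eq_of_history_eq {j k : ℕ} {ω ω' : Ω}
    (h : history A L k ω = history A L k ω') (hjk : j < k) :
    propensity μ A L j ω = propensity μ A L j ω' := by
  rw [propensity, propensity, apply_eq_of_history_eq h hjk, history_eq_of_le h hjk.le]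

theorem ipwWeight_eq_of_history_eq {p : ℕ → 𝒜} {r k : ℕ} {ω ω' : Ω}
    (h : history A L k ω = history A L k ω') :
    ipwWeight μ A L p r k ω = ipwWeight μ A L p r k ω' :=
  prod_congr rfl fun j hj => by
    rw [apply_eq_of_history_eq h (mem_Ico.1 hj).2, propensity_eq_of_history_eq h (mem_Ico.1 hj).2]

theorem ipwWeight_succ {p : ℕ → 𝒜} {r n : ℕ} (hrn : r ≤ n) (ω : Ω) :
    ipwWeight μ A L p r (n + 1) ω =
      ipwWeight μ A L p r n ω * if A n ω = p n then (propensity μ A L n ω)⁻¹ else 0 :=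
  prod_Ico_succ_top hrn _

theorem ipwWeight_eq_inv_prod {p : ℕ → 𝒜} {r n : ℕ} {ω : Ω} (hp : ∀ j ∈ Ico r n, A j ω = p j) :
    ipwWeight μ A L p r n ω = (∏ j ∈ Ico r n, propensity μ A L j ω)⁻¹ := by
  rw [ipwWeight, ← prod_inv_distrib]
  exact prod_congr rfl fun j hj => if_pos (hp j hj)

theorem ipwWeight_eq_zero {p : ℕ → 𝒜} {r n : ℕ} {ω : Ω} (hp : ¬∀ j ∈ Ico r n, A j ω = p j) :
    ipwWeight μ A L p r n ω = 0 := by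
  push Not at hp
  obtain ⟨j, hj, hne⟩ := hp
  exact prod_eq_zero hj (if_neg hne)

theorem ex_ipwWeight_mul {ξ : Type*} (hμ : ∀ ω, 0 ≤ μ ω) (X : Ω → ξ) (p : ℕ → 𝒜) {r n : ℕ}
    (hrn : r ≤ n) {Φ : Ω → ℝ}
    (hCI : ∀ k ∈ Ico r n, CondIndepGiven μ (fun ω => A k ω = p k) X (history A L k))
    (hpos : ∀ k ∈ Ico r n, ∀ ω₀, 0 < μ ω₀ →
      0 < cpr μ (fun ω => A k ω = p k) (fun ω => history A L k ω = history A L k ω₀))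
    (hΦ : ∀ ω ω', history A L r ω = history A L r ω' → X ω = X ω' → Φ ω = Φ ω') :
    ex μ (fun ω => ipwWeight μ A L p r n ω * Φ ω) = ex μ Φ := by
  induction n, hrn using Nat.le_induction with
  | base => simp [ipwWeight]
  | succ n hrn ih =>
    have hn : n ∈ Ico r (n + 1) := mem_Ico.2 ⟨hrn, n.lt_succ_self⟩
    have hsub : Ico r n ⊆ Ico r (n + 1) := Ico_subset_Ico_right n.le_succ
    calc ex μ (fun ω => ipwWeight μ A L p r (n + 1) ω * Φ ω)
        = ex μ (fun ω => if A n ω = p n then ipwWeight μ A L p r n ω * Φ ω /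
            cpr μ (fun ω => A n ω = p n) (fun ω' => history A L n ω' = history A L n ω)
            else 0) := by
          congr 1
          funext ω
          rw [ipwWeight_succ hrn]
          split_ifs with hA
          · rw [propensity, hA, div_eq_mul_inv]
            ring
          · rw [mul_zero, zero_mul]
      _ = ex μ (fun ω => ipwWeight μ A L p r n ω * Φ ω) :=
          ex_ite_div_cpr μ hμ (hCI n hn) (hpos n hn) fun ω ω' hH hX => by
            rw [ipwWeight_eq_of_history_eq hH, hΦ ω ω' (history_eq_of_le hH hrn) hX]
      _ = ex μ Φ := ih (fun k hk => hCI k (hsub hk)) (fun k hk => hpos k (hsub hk))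

end History

section Counterfactual

variable {Ω : Type} {𝒜 ℒ : Type*} {A : ℕ → Ω → 𝒜} {L : ℕ → Ω → ℒ} {CL : (ℕ → 𝒜) → ℕ → Ω → ℒ}

theorem eq_counterfactual_of_pattern
    (hTO : ∀ (a a' : ℕ → 𝒜) (j : ℕ), (∀ i < j, a i = a' i) → ∀ ω, CL a j ω = CL a' j ω)
    (hcons : ∀ j ω, L j ω = CL (fun i => A i ω) j ω) {p : ℕ → 𝒜} {r n : ℕ} {ω : Ω}
    (hp : ∀ j ∈ Ico r n, A j ω = p j) :
    L n ω = CL (fun i => if i < r then A i ω else p i) n ω := by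
  rw [hcons]
  refine hTO _ _ n (fun i hi => ?_) ω
  split_ifs with h
  · rfl
  · exact hp i (mem_Ico.2 ⟨not_lt.1 h, hi⟩)

theorem counterfactual_congr
    (hTO : ∀ (a a' : ℕ → 𝒜) (j : ℕ), (∀ i < j, a i = a' i) → ∀ ω, CL a j ω = CL a' j ω)
    {p : ℕ → 𝒜} {r n : ℕ} {ω ω' : Ω} (hA : ∀ i < r, A i ω = A i ω')
    (hX : ∀ a j, CL a j ω = CL a j ω') :
    CL (fun i => if i < r then A i ω else p i) n ω =
      CL (fun i => if i < r then A i ω' else p i) n ω' := by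
  rw [hX]
  refine hTO _ _ n (fun i _ => ?_) ω'
  split_ifs with h
  · exact hA i h
  · rfl

theorem iptw_integrand_eq_of_pattern {𝒱 : Type*} [Fintype Ω] (μ : Ω → ℝ) (Y : ℒ → ℝ)
    (hTO : ∀ (a a' : ℕ → 𝒜) (j : ℕ), (∀ i < j, a i = a' i) → ∀ ω, CL a j ω = CL a' j ω)
    (hcons : ∀ j ω, L j ω = CL (fun i => A i ω) j ω) (V : Ω → 𝒱) {r t : ℕ}
    {m hstar : (ℕ → 𝒜) → 𝒱 → ℝ} {gstar : ℕ → 𝒜 → (ℕ → 𝒜) → 𝒱 → ℝ}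
    (hm : ∀ (a a' : ℕ → 𝒜) (v : 𝒱), (∀ i, r ≤ i → i ≤ t → a i = a' i) → m a v = m a' v)
    (hhstar : ∀ (a a' : ℕ → 𝒜) (v : 𝒱), (∀ i, r ≤ i → i ≤ t → a i = a' i) →
      hstar a v = hstar a' v)
    (hgstar_dep : ∀ (j : ℕ) (a : 𝒜) (ap ap' : ℕ → 𝒜) (v : 𝒱),
      (∀ i, r ≤ i → i < j → ap i = ap' i) → gstar j a ap v = gstar j a ap' v)
    {p : ℕ → 𝒜} {ω : Ω} (hp : ∀ j ∈ Ico r (t + 1), A j ω = p j) :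
    hstar (fun i => A i ω) (V ω) *
      (∏ j ∈ Ico r (t + 1), gstar j (A j ω) (fun i => A i ω) (V ω)) /
      (∏ j ∈ Ico r (t + 1), propensity μ A L j ω) *
      (Y (L (t + 1) ω) - m (fun i => A i ω) (V ω)) =
    ipwWeight μ A L p r (t + 1) ω * ((hstar p (V ω) * ∏ j ∈ Ico r (t + 1), gstar j (p j) p (V ω)) *
      (Y (CL (fun i => if i < r then A i ω else p i) (t + 1) ω) - m p (V ω))) := by
  have hagree : ∀ i, r ≤ i → i ≤ t → A i ω = p i := fun i hri hit =>
    hp i (mem_Ico.2 ⟨hri, Nat.lt_succ_of_le hit⟩)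
  have hgstar : ∀ j ∈ Ico r (t + 1),
      gstar j (A j ω) (fun i => A i ω) (V ω) = gstar j (p j) p (V ω) := fun j hj => by
    rw [hp j hj]
    exact hgstar_dep j _ _ _ _ fun i hri hij => hp i (mem_Ico.2 ⟨hri, hij.trans (mem_Ico.1 hj).2⟩)
  rw [hhstar _ p _ hagree, hm _ p _ hagree, prod_congr rfl hgstar,
    eq_counterfactual_of_pattern hTO hcons hp, ipwWeight_eq_inv_prod hp]
  ring

end Counterfactual

theorem hrmsm_stabilized_iptw_unbiased_general
    {Ω 𝒜 ℒ 𝒱 : Type} [Fintype Ω]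
    (μ : Ω → ℝ) (hμ : ∀ ω, 0 ≤ μ ω)
    (K s : ℕ)
    (A : ℕ → Ω → 𝒜) (CL : (ℕ → 𝒜) → ℕ → Ω → ℒ) (L : ℕ → Ω → ℒ) (Y : ℒ → ℝ)
    (hTO : ∀ (a a' : ℕ → 𝒜) (j : ℕ), (∀ i < j, a i = a' i) → ∀ ω, CL a j ω = CL a' j ω)
    (hcons : ∀ j ω, L j ω = CL (fun i => A i ω) j ω)
    (SRA : ∀ j ≤ K, ∀ (a : 𝒜) (x : (ℕ → 𝒜) → ℕ → ℒ) (ab : ℕ → 𝒜) (lb : ℕ → ℒ),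
      pr μ (fun ω => (∀ i < j, A i ω = ab i) ∧ (∀ i ≤ j, L i ω = lb i)) > 0 →
      cpr μ (fun ω => A j ω = a ∧ ∀ (ar : ℕ → 𝒜) (jj : ℕ), CL ar jj ω = x ar jj)
        (fun ω => (∀ i < j, A i ω = ab i) ∧ (∀ i ≤ j, L i ω = lb i)) =
      cpr μ (fun ω => A j ω = a)
        (fun ω => (∀ i < j, A i ω = ab i) ∧ (∀ i ≤ j, L i ω = lb i)) *
      cpr μ (fun ω => ∀ (ar : ℕ → 𝒜) (jj : ℕ), CL ar jj ω = x ar jj)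
        (fun ω => (∀ i < j, A i ω = ab i) ∧ (∀ i ≤ j, L i ω = lb i)))
    (t : ℕ) (ht2 : t ≤ K)
    (POS : ∀ j, t + 1 - s ≤ j → j ≤ t → ∀ (a : 𝒜) (ω : Ω), μ ω > 0 →
      cpr μ (fun ω' => A j ω' = a)
        (fun ω' => (∀ i < j, A i ω' = A i ω) ∧ (∀ i ≤ j, L i ω' = L i ω)) > 0)
    (V : Ω → 𝒱)
    (hV : ∀ ω ω', (∀ i < t + 1 - s, A i ω = A i ω') →
      (∀ i ≤ t + 1 - s, L i ω = L i ω') → V ω = V ω')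
    (m : (ℕ → 𝒜) → 𝒱 → ℝ)
    (hm : ∀ (a a' : ℕ → 𝒜) (v : 𝒱), (∀ i, t + 1 - s ≤ i → i ≤ t → a i = a' i) →
      m a v = m a' v)
    (hmodel : ∀ (ab : ℕ → 𝒜) (v : 𝒱), pr μ (fun ω => V ω = v) > 0 →
      cex μ (fun ω => Y (CL (fun i => if i < t + 1 - s then A i ω else ab i) (t + 1) ω))
        (fun ω => V ω = v) = m ab v)
    (hstar : (ℕ → 𝒜) → 𝒱 → ℝ)
    (hhstar : ∀ (a a' : ℕ → 𝒜) (v : 𝒱), (∀ i, t + 1 - s ≤ i → i ≤ t → a i = a' i) →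
      hstar a v = hstar a' v)
    (gstar : ℕ → 𝒜 → (ℕ → 𝒜) → 𝒱 → ℝ)
    (hgstar_dep : ∀ (j : ℕ) (a : 𝒜) (ap ap' : ℕ → 𝒜) (v : 𝒱),
      (∀ i, t + 1 - s ≤ i → i < j → ap i = ap' i) → gstar j a ap v = gstar j a ap' v) :
    ex μ (fun ω => hstar (fun i => A i ω) (V ω) *
      (∏ j ∈ Finset.Ico (t + 1 - s) (t + 1), gstar j (A j ω) (fun i => A i ω) (V ω)) /
      (∏ j ∈ Finset.Ico (t + 1 - s) (t + 1),
        cpr μ (fun ω' => A j ω' = A j ω)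
          (fun ω' => (∀ i < j, A i ω' = A i ω) ∧ (∀ i ≤ j, L i ω' = L i ω))) *
      (Y (L (t + 1) ω) - m (fun i => A i ω) (V ω))) = 0 := by
  set r := t + 1 - s
  set X : Ω → (ℕ → 𝒜) → ℕ → ℒ := fun ω ar jj => CL ar jj ω
  simp only [← propensity_eq_cpr]
  refine (ex_eq_of_sum_fiber_eq μ hμ (fun ω (j : Ico r (t + 1)) => A j ω) (g := 0)
    fun ω₀ h₀ => ?_).trans (by simp [ex])
  set p : ℕ → 𝒜 := fun i => A i ω₀
  set Φ : Ω → ℝ := fun ω => (hstar p (V ω) * ∏ j ∈ Ico r (t + 1), gstar j (p j) p (V ω)) *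
    (Y (CL (fun i => if i < r then A i ω else p i) (t + 1) ω) - m p (V ω))
  have hΦ : ∀ ω ω', history A L r ω = history A L r ω' → X ω = X ω' → Φ ω = Φ ω' := by
    intro ω ω' hH hX
    obtain ⟨hA, hL⟩ := history_eq_iff.1 hH
    simp only [Φ, hV ω ω' hA hL, counterfactual_congr hTO hA (congrFun₂ hX)]
  calc _ = ex μ (fun ω => ipwWeight μ A L p r (t + 1) ω * Φ ω) := by
        rw [sum_filter, ex]
        refine sum_congr rfl fun ω _ => ?_
        by_cases hp : ∀ j ∈ Ico r (t + 1), A j ω = p j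
        · rw [if_pos (funext fun j : Ico r (t + 1) => hp j j.2),
            iptw_integrand_eq_of_pattern μ Y hTO hcons V hm hhstar hgstar_dep hp]
        · rw [if_neg fun h => hp fun j hj => congrFun h ⟨j, hj⟩, ipwWeight_eq_zero hp,
            zero_mul, zero_mul]
    _ = ex μ Φ := ex_ipwWeight_mul hμ X p (by omega)
        (fun k _ => condIndepGiven_history hμ fun x ab lb hpos => by
          simpa only [X, funext_iff] using SRA k (by grind) (p k) x ab lb hpos)
        (fun k hk ω₁ h₁ => by
          simpa only [history_eq_iff] using POS k (mem_Ico.1 hk).1 (by grind) (p k) ω₁ h₁) hΦ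
    _ = 0 := ex_mul_sub_eq_zero_of_cex_eq μ hμ V
        (fun v => hstar p v * ∏ j ∈ Ico r (t + 1), gstar j (p j) p v) (m p) (hmodel p)
    _ = _ := by simp

/-- stabilized weights preserve the unbiasedness of the IPTW
estimating function for a correctly specified (stratified) HRMSM. -/
theorem hrmsm_stabilized_iptw_unbiased
    {Ω 𝒜 ℒ 𝒱 : Type} [Fintype Ω]
    (μ : Ω → ℝ) (hμ : ∀ ω, 0 ≤ μ ω) (hsum : ∑ ω, μ ω = 1)
    (K s : ℕ) (hs : 1 ≤ s) (hsK : s ≤ K + 1)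
    (A : ℕ → Ω → 𝒜) (CL : (ℕ → 𝒜) → ℕ → Ω → ℒ) (L : ℕ → Ω → ℒ) (Y : ℒ → ℝ)
    (hTO : ∀ (a a' : ℕ → 𝒜) (j : ℕ), (∀ i < j, a i = a' i) → ∀ ω, CL a j ω = CL a' j ω)
    (hcons : ∀ j ω, L j ω = CL (fun i => A i ω) j ω)
    (SRA : ∀ j ≤ K, ∀ (a : 𝒜) (x : (ℕ → 𝒜) → ℕ → ℒ) (ab : ℕ → 𝒜) (lb : ℕ → ℒ),
      pr μ (fun ω => (∀ i < j, A i ω = ab i) ∧ (∀ i ≤ j, L i ω = lb i)) > 0 →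
      cpr μ (fun ω => A j ω = a ∧ ∀ (ar : ℕ → 𝒜) (jj : ℕ), CL ar jj ω = x ar jj)
        (fun ω => (∀ i < j, A i ω = ab i) ∧ (∀ i ≤ j, L i ω = lb i)) =
      cpr μ (fun ω => A j ω = a)
        (fun ω => (∀ i < j, A i ω = ab i) ∧ (∀ i ≤ j, L i ω = lb i)) *
      cpr μ (fun ω => ∀ (ar : ℕ → 𝒜) (jj : ℕ), CL ar jj ω = x ar jj)
        (fun ω => (∀ i < j, A i ω = ab i) ∧ (∀ i ≤ j, L i ω = lb i)))
    (t : ℕ) (ht1 : s - 1 ≤ t) (ht2 : t ≤ K)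
    (POS : ∀ j, t + 1 - s ≤ j → j ≤ t → ∀ (a : 𝒜) (ω : Ω), μ ω > 0 →
      cpr μ (fun ω' => A j ω' = a)
        (fun ω' => (∀ i < j, A i ω' = A i ω) ∧ (∀ i ≤ j, L i ω' = L i ω)) > 0)
    (V : Ω → 𝒱)
    (hV : ∀ ω ω', (∀ i < t + 1 - s, A i ω = A i ω') →
      (∀ i ≤ t + 1 - s, L i ω = L i ω') → V ω = V ω')
    (m : (ℕ → 𝒜) → 𝒱 → ℝ)
    (hm : ∀ (a a' : ℕ → 𝒜) (v : 𝒱), (∀ i, t + 1 - s ≤ i → i ≤ t → a i = a' i) →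
      m a v = m a' v)
    (hmodel : ∀ (ab : ℕ → 𝒜) (v : 𝒱), pr μ (fun ω => V ω = v) > 0 →
      cex μ (fun ω => Y (CL (fun i => if i < t + 1 - s then A i ω else ab i) (t + 1) ω))
        (fun ω => V ω = v) = m ab v)
    (hstar : (ℕ → 𝒜) → 𝒱 → ℝ)
    (hhstar : ∀ (a a' : ℕ → 𝒜) (v : 𝒱), (∀ i, t + 1 - s ≤ i → i ≤ t → a i = a' i) →
      hstar a v = hstar a' v)
    (gstar : ℕ → 𝒜 → (ℕ → 𝒜) → 𝒱 → ℝ)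
    (hgstar_nonneg : ∀ (j : ℕ) (a : 𝒜) (ap : ℕ → 𝒜) (v : 𝒱), 0 ≤ gstar j a ap v)
    (hgstar_dep : ∀ (j : ℕ) (a : 𝒜) (ap ap' : ℕ → 𝒜) (v : 𝒱),
      (∀ i, t + 1 - s ≤ i → i < j → ap i = ap' i) → gstar j a ap v = gstar j a ap' v) :
    ex μ (fun ω => hstar (fun i => A i ω) (V ω) *
      (∏ j ∈ Finset.Ico (t + 1 - s) (t + 1), gstar j (A j ω) (fun i => A i ω) (V ω)) /
      (∏ j ∈ Finset.Ico (t + 1 - s) (t + 1),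
        cpr μ (fun ω' => A j ω' = A j ω)
          (fun ω' => (∀ i < j, A i ω' = A i ω) ∧ (∀ i ≤ j, L i ω' = L i ω))) *
      (Y (L (t + 1) ω) - m (fun i => A i ω) (V ω))) = 0 :=
  hrmsm_stabilized_iptw_unbiased_general μ hμ K s A CL L Y hTO hcons SRA t ht2 POS V hV m hm hmodel
    hstar hhstar gstar hgstar_dep
end
end
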